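/- Let A ⊆ ℝⁿ be a convex body and (Aʲ) a sequence of convex bodies with Aʲ ⊇ A^{j+1} ⊇ A for all j and d_H(A, Aʲ) → 0. Then for every t with 0 ≤ t < r(A), the inner parallel bodies satisfy d_H(A_t, Aʲ_t) → 0 as j → ∞, where A_t = A ⊖ tB. -/

import Mathlib

open Filter

/-- Inner parallel body (Minkowski erosion by the ball of radius `t`). -/
def innerParallel {n : ℕ} (A : Set (EuclideanSpace ℝ (Fin n))) (t : ℝ) :
    Set (EuclideanSpace ℝ (Fin n)) :=
  {x | Metric.closedBall x t ⊆ A}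

/-- The inradius of a set: the largest radius of a ball contained in it. -/
noncomputable def inradius {n : ℕ} (A : Set (EuclideanSpace ℝ (Fin n))) : ℝ :=
  sSup {r : ℝ | ∃ c, Metric.closedBall c r ⊆ A}

/-!
If `A ⊆ B` are within Hausdorff distance `ε` and `A` is convex and contains a ball
`B(c, r)` with `r > t`, then a centre `x` of a `t`-ball inside `B` becomes a centre of a
`t`-ball inside `A` once it is pushed towards `c` by the fraction `ε / (r - t + ε)`: every
point of the pushed ball is a convex combination of a point of `A` that is `ε`-close to it
and a point of `B(c, r)`. Hence `d_H(A ⊖ tB, B ⊖ tB) = O(ε)`.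
-/

open Metric

lemma closedBall_lineMap_subset_of_forall_dist_le {E : Type*} [NormedAddCommGroup E]
    [NormedSpace ℝ E] {A B : Set E} (hA : Convex ℝ A) {c x : E} {r t ε : ℝ}
    (hball : closedBall c r ⊆ A) (htr : t < r) (hε : 0 < ε)
    (hnear : ∀ b ∈ B, ∃ a ∈ A, dist b a ≤ ε) (hx : closedBall x t ⊆ B) :
    closedBall (AffineMap.lineMap x c (ε / (r - t + ε))) t ⊆ A := by
  set L := ε / (r - t + ε) with hL
  set s := (r - t) / ε with hs_def
  have hs : 0 ≤ s := div_nonneg (by linarith) hε.le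
  have hL0 : 0 ≤ L := by positivity
  have hLs : L * s = 1 - L := by
    have : r - t + ε ≠ 0 := by linarith
    rw [hL, hs_def]; field_simp; ring
  intro y hy
  set v := y - AffineMap.lineMap x c L
  have hv : ‖v‖ ≤ t := by rwa [← dist_eq_norm]
  obtain ⟨a, haA, hxa⟩ := hnear (x + v) (hx (by simpa [dist_eq_norm] using hv))
  set e := x + v - a
  have he : ‖e‖ ≤ ε := by rwa [← dist_eq_norm]
  have hz : c + v + s • e ∈ A := hball <| by
    rw [mem_closedBall, dist_eq_norm, add_sub_right_comm, add_sub_cancel_left]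
    calc ‖v + s • e‖ ≤ ‖v‖ + s * ‖e‖ := by
          simpa [norm_smul, abs_of_nonneg hs] using norm_add_le v (s • e)
      _ ≤ t + s * ε := by gcongr
      _ = r := by rw [hs_def]; field_simp; ring
  have hy_eq : (1 - L) • a + L • (c + v + s • e) = y := by
    have ha : a = x + v - e := by simp [e]
    calc (1 - L) • a + L • (c + v + s • e)
        = AffineMap.lineMap x c L + v + (L * s - (1 - L)) • e := by
          rw [ha, AffineMap.lineMap_apply_module]; module
      _ = y := by simp [hLs, v]
  have hL1 : 0 ≤ 1 - L := by rw [← hLs]; positivity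
  exact hy_eq ▸ hA haA hz hL1 hL0 (by ring)

section InnerParallel

variable {n : ℕ}

lemma innerParallel_mono {A B : Set (EuclideanSpace ℝ (Fin n))} (h : A ⊆ B) (t : ℝ) :
    innerParallel A t ⊆ innerParallel B t :=
  fun _ hx => hx.trans h

lemma exists_closedBall_subset_of_lt_inradius {A : Set (EuclideanSpace ℝ (Fin n))} {t : ℝ}
    (ht : t < inradius A) : ∃ c r, t < r ∧ closedBall c r ⊆ A := by
  have hne : {r : ℝ | ∃ c, closedBall c r ⊆ A}.Nonempty :=
    ⟨-1, 0, by simp⟩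
  obtain ⟨r, ⟨c, hball⟩, htr⟩ := exists_lt_of_lt_csSup hne ht
  exact ⟨c, r, htr, hball⟩

lemma hausdorffDist_innerParallel_le {A B : Set (EuclideanSpace ℝ (Fin n))}
    (hA : Convex ℝ A) (hAb : Bornology.IsBounded A) (hBb : Bornology.IsBounded B)
    (hAB : A ⊆ B) {c : EuclideanSpace ℝ (Fin n)} {r t ε : ℝ} (hball : closedBall c r ⊆ A)
    (ht : 0 ≤ t) (htr : t < r) (hε : hausdorffDist A B < ε) :
    hausdorffDist (innerParallel A t) (innerParallel B t) ≤ ε / (r - t + ε) * (ε + diam A) := by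
  have hε0 : 0 < ε := hausdorffDist_nonneg.trans_lt hε
  have hcA : c ∈ A := hball (mem_closedBall_self (ht.trans htr.le))
  have hnear : ∀ b ∈ B, ∃ a ∈ A, dist b a ≤ ε := fun b hb => by
    obtain ⟨a, haA, hba⟩ := exists_dist_lt_of_hausdorffDist_lt hb
      (hausdorffDist_comm.trans_lt hε)
      (hausdorffEDist_ne_top_of_nonempty_of_bounded ⟨c, hAB hcA⟩ ⟨c, hcA⟩ hBb hAb)
    exact ⟨a, haA, hba.le⟩
  apply hausdorffDist_le_of_mem_dist (by positivity)
  · exact fun x hx => ⟨x, innerParallel_mono hAB t hx, by simp; positivity⟩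
  · intro x hx
    refine ⟨_, closedBall_lineMap_subset_of_forall_dist_le hA hball htr hε0 hnear hx, ?_⟩
    obtain ⟨a, haA, hxa⟩ := hnear x (hx (mem_closedBall_self ht))
    have hxc : dist x c ≤ ε + diam A :=
      (dist_triangle x a c).trans (add_le_add hxa (dist_le_diam_of_mem hAb haA hcA))
    rw [dist_left_lineMap, Real.norm_of_nonneg (by positivity)]
    gcongr

end InnerParallel

theorem stmt_5_general {n : ℕ} (A : Set (EuclideanSpace ℝ (Fin n)))
    (Aseq : ℕ → Set (EuclideanSpace ℝ (Fin n)))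
    (hAc : IsCompact A) (hAconv : Convex ℝ A)
    (hseqc : ∀ j, IsCompact (Aseq j))
    (hcontains : ∀ j, A ⊆ Aseq j)
    (hconv : Tendsto (fun j => Metric.hausdorffDist A (Aseq j)) atTop (nhds 0)) :
    ∀ t : ℝ, 0 ≤ t → t < inradius A →
      Tendsto (fun j => Metric.hausdorffDist (innerParallel A t) (innerParallel (Aseq j) t))
        atTop (nhds 0) := by
  intro t ht htA
  obtain ⟨c, r, htr, hball⟩ := exists_closedBall_subset_of_lt_inradius htA
  set ε : ℕ → ℝ := fun j => hausdorffDist A (Aseq j) + 1 / (j + 1)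
  have hε : Tendsto ε atTop (nhds 0) := by
    simpa [ε] using hconv.add tendsto_one_div_add_atTop_nhds_zero_nat
  have hbound : Tendsto (fun j => ε j / (r - t + ε j) * (ε j + diam A)) atTop (nhds 0) := by
    simpa using (hε.div (tendsto_const_nhds.add hε) (by simpa using (sub_pos.2 htr).ne')).mul
      (hε.add_const (diam A))
  refine squeeze_zero (fun _ => hausdorffDist_nonneg) (fun j => ?_) hbound
  exact hausdorffDist_innerParallel_le hAconv hAc.isBounded (hseqc j).isBounded (hcontains j)
    hball ht htr (lt_add_of_pos_right _ Nat.one_div_pos_of_nat)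

theorem stmt_5 {n : ℕ} (A : Set (EuclideanSpace ℝ (Fin n)))
    (Aseq : ℕ → Set (EuclideanSpace ℝ (Fin n)))
    (hAc : IsCompact A) (hAconv : Convex ℝ A) (hAint : (interior A).Nonempty)
    (hseqc : ∀ j, IsCompact (Aseq j)) (hseqconv : ∀ j, Convex ℝ (Aseq j))
    (hseqint : ∀ j, (interior (Aseq j)).Nonempty)
    (hnested : ∀ j, Aseq (j + 1) ⊆ Aseq j) (hcontains : ∀ j, A ⊆ Aseq j)
    (hconv : Tendsto (fun j => Metric.hausdorffDist A (Aseq j)) atTop (nhds 0)) :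
    ∀ t : ℝ, 0 ≤ t → t < inradius A →
      Tendsto (fun j => Metric.hausdorffDist (innerParallel A t) (innerParallel (Aseq j) t))
        atTop (nhds 0) :=
  stmt_5_general A Aseq hAc hAconv hseqc hcontains hconv
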